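/- Let d ≥ 1 and let n, β be real numbers with n > 2 and β > 0. Define g(x) = (1+|x|)^{−n−β} and g_s(x) = s^{−n/2} g(x/√s) for s > 0. Then there is a constant C > 0, depending only on d, n, β, such that for every r > 0 and every x ∈ ℝ^d, ∫_{r²}^∞ g_s(x) ds ≤ C r^{2−n} (1 + |x|/r)^{−n+2}. -/

import Mathlib

/-!
Split the range of integration at `s = R²` with `R = max r |x|`. Beyond `R²` the profile
factor is at most `1`, and the tail `∫ s^{-n/2}` converges because `n > 2`. Between `r²` and
`|x|²` use `(1 + |x|/√s)^{-n-β} ≤ (|x|/√s)^{-n-β}`, which leaves `|x|^{-n-β} s^{β/2}`,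
integrable at `0`. Both pieces are `O(R^{2-n})`, and `R` is comparable to
`r + |x| = r (1 + |x|/r)`.
-/

open MeasureTheory Set

/-- `decayKernel n β |x| s = g_s(x)`. -/
noncomputable def decayKernel (n β X s : ℝ) : ℝ := s ^ (-n / 2) * (1 + X / √s) ^ (-n - β)

lemma lintegral_Ioi_rpow {p c : ℝ} (hp : p < -1) (hc : 0 < c) :
    ∫⁻ s in Ioi c, ENNReal.ofReal (s ^ p) = ENNReal.ofReal (c ^ (p + 1) / -(p + 1)) := by
  rw [div_neg, ← neg_div, ← integral_Ioi_rpow_of_lt hp hc,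
    ofReal_integral_eq_lintegral_ofReal (integrableOn_Ioi_rpow_of_lt hp hc)]
  filter_upwards [ae_restrict_mem measurableSet_Ioi] with s hs
  exact Real.rpow_nonneg (hc.trans hs).le p

lemma lintegral_Ioc_zero_rpow {p b : ℝ} (hp : -1 < p) (hb : 0 ≤ b) :
    ∫⁻ s in Ioc 0 b, ENNReal.ofReal (s ^ p) = ENNReal.ofReal (b ^ (p + 1) / (p + 1)) := by
  have hint : IntegrableOn (fun s : ℝ => s ^ p) (Ioc 0 b) :=
    (intervalIntegrable_iff_integrableOn_Ioc_of_le hb).mp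
      (intervalIntegral.intervalIntegrable_rpow' hp)
  rw [← ofReal_integral_eq_lintegral_ofReal hint, ← intervalIntegral.integral_of_le hb,
    integral_rpow (Or.inl hp), Real.zero_rpow (by linarith), sub_zero]
  filter_upwards [ae_restrict_mem measurableSet_Ioc] with s hs
  exact Real.rpow_nonneg hs.1.le p

lemma sq_rpow_div_two {R : ℝ} (hR : 0 ≤ R) (q : ℝ) : (R ^ 2) ^ (q / 2) = R ^ q := by
  rw [← Real.rpow_natCast_mul hR]
  norm_num [mul_div_cancel₀]

section DecayKernel

variable {n β X s : ℝ}

lemma decayKernel_le_rpow (hs : 0 < s) (hX : 0 ≤ X) (hnβ : 0 ≤ n + β) :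
    decayKernel n β X s ≤ s ^ (-n / 2) := by
  refine mul_le_of_le_one_right (Real.rpow_nonneg hs.le _) ?_
  exact Real.rpow_le_one_of_one_le_of_nonpos (le_add_of_nonneg_right (by positivity)) (by linarith)

lemma decayKernel_le_mul_rpow (hs : 0 < s) (hX : 0 < X) (hnβ : 0 ≤ n + β) :
    decayKernel n β X s ≤ X ^ (-n - β) * s ^ (β / 2) := by
  have hsq : 0 < √s := Real.sqrt_pos.mpr hs
  calc decayKernel n β X s ≤ s ^ (-n / 2) * (X / √s) ^ (-n - β) :=
        mul_le_mul_of_nonneg_left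
          (Real.rpow_le_rpow_of_nonpos (by positivity) (by linarith) (by linarith))
          (Real.rpow_nonneg hs.le _)
    _ = X ^ (-n - β) * s ^ (β / 2) := by
        rw [Real.div_rpow hX.le hsq.le, Real.sqrt_eq_rpow, ← Real.rpow_mul hs.le, mul_div_assoc',
          mul_comm, mul_div_assoc, ← Real.rpow_sub hs]
        ring_nf

lemma lintegral_Ioi_sq_decayKernel_le (hn : 2 < n) (hnβ : 0 ≤ n + β) {R : ℝ} (hR : 0 < R)
    (hX : 0 ≤ X) :
    ∫⁻ s in Ioi (R ^ 2), ENNReal.ofReal (decayKernel n β X s) ≤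
      ENNReal.ofReal (2 / (n - 2) * R ^ (2 - n)) := by
  calc ∫⁻ s in Ioi (R ^ 2), ENNReal.ofReal (decayKernel n β X s)
      ≤ ∫⁻ s in Ioi (R ^ 2), ENNReal.ofReal (s ^ (-n / 2)) := by
        refine setLIntegral_mono' measurableSet_Ioi fun s hs => ?_
        exact ENNReal.ofReal_le_ofReal (decayKernel_le_rpow ((pow_pos hR 2).trans hs) hX hnβ)
    _ = ENNReal.ofReal (2 / (n - 2) * R ^ (2 - n)) := by
        rw [lintegral_Ioi_rpow (by linarith) (pow_pos hR 2)]
        have hn2 : n - 2 ≠ 0 := (sub_pos.mpr hn).ne'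
        rw [show -n / 2 + 1 = (2 - n) / 2 by ring, sq_rpow_div_two hR.le,
          show -((2 - n) / 2) = (n - 2) / 2 by ring]
        field_simp

lemma lintegral_Ioc_decayKernel_le (hβ : -2 < β) (hnβ : 0 ≤ n + β) {a : ℝ} (ha : 0 ≤ a)
    (hX : 0 < X) :
    ∫⁻ s in Ioc a (X ^ 2), ENNReal.ofReal (decayKernel n β X s) ≤
      ENNReal.ofReal (2 / (β + 2) * X ^ (2 - n)) := by
  calc ∫⁻ s in Ioc a (X ^ 2), ENNReal.ofReal (decayKernel n β X s)
      ≤ ∫⁻ s in Ioc 0 (X ^ 2),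
          ENNReal.ofReal (X ^ (-n - β)) * ENNReal.ofReal (s ^ (β / 2)) := by
        refine (lintegral_mono_set (Ioc_subset_Ioc_left ha)).trans ?_
        refine setLIntegral_mono' measurableSet_Ioc fun s hs => ?_
        rw [← ENNReal.ofReal_mul (Real.rpow_nonneg hX.le _)]
        exact ENNReal.ofReal_le_ofReal (decayKernel_le_mul_rpow hs.1 hX hnβ)
    _ = ENNReal.ofReal (2 / (β + 2) * X ^ (2 - n)) := by
        rw [lintegral_const_mul' _ _ ENNReal.ofReal_ne_top,
          lintegral_Ioc_zero_rpow (by linarith) (by positivity),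
          ← ENNReal.ofReal_mul (Real.rpow_nonneg hX.le _)]
        congr 1
        rw [show β / 2 + 1 = (β + 2) / 2 by ring, sq_rpow_div_two hX.le, mul_div_assoc',
          ← Real.rpow_add hX]
        field_simp
        ring_nf

end DecayKernel

lemma lintegral_Ioi_sq_decayKernel_le_max {n β X r : ℝ} (hn : 2 < n) (hβ : -2 < β) (hr : 0 < r)
    (hX : 0 ≤ X) :
    ∫⁻ s in Ioi (r ^ 2), ENNReal.ofReal (decayKernel n β X s) ≤
      ENNReal.ofReal ((2 / (β + 2) + 2 / (n - 2)) * max r X ^ (2 - n)) := by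
  have hnβ : 0 ≤ n + β := by linarith
  set R := max r X
  have hR : 0 < R := lt_max_of_lt_left hr
  have hmiddle : ∫⁻ s in Ioc (r ^ 2) (R ^ 2), ENNReal.ofReal (decayKernel n β X s) ≤
      ENNReal.ofReal (2 / (β + 2) * R ^ (2 - n)) := by
    rcases le_or_gt X r with hXr | hrX
    · simp [R, max_eq_left hXr]
    · simp only [R, max_eq_right hrX.le]
      exact lintegral_Ioc_decayKernel_le hβ hnβ (sq_nonneg r) (hr.trans hrX)
  have hβ2 : 0 < β + 2 := by linarith
  have hn2 : 0 < n - 2 := by linarith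
  calc ∫⁻ s in Ioi (r ^ 2), ENNReal.ofReal (decayKernel n β X s)
      ≤ ∫⁻ s in Ioc (r ^ 2) (R ^ 2) ∪ Ioi (R ^ 2), ENNReal.ofReal (decayKernel n β X s) :=
        lintegral_mono_set Ioi_subset_Ioc_union_Ioi
    _ ≤ ENNReal.ofReal (2 / (β + 2) * R ^ (2 - n)) +
          ENNReal.ofReal (2 / (n - 2) * R ^ (2 - n)) :=
        (lintegral_union_le _ _ _).trans
          (add_le_add hmiddle (lintegral_Ioi_sq_decayKernel_le hn hnβ hR hX))
    _ = ENNReal.ofReal ((2 / (β + 2) + 2 / (n - 2)) * R ^ (2 - n)) := by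
        rw [← ENNReal.ofReal_add (by positivity) (by positivity), add_mul]

lemma max_rpow_le {r X q : ℝ} (hr : 0 < r) (hX : 0 ≤ X) (hq : q ≤ 0) :
    max r X ^ q ≤ 2 ^ (-q) * r ^ q * (1 + X / r) ^ q := by
  have hsum : r * (1 + X / r) = r + X := by field_simp
  rw [mul_assoc, ← Real.mul_rpow hr.le (by positivity), hsum]
  calc max r X ^ q = 2 ^ (-q) * (2 * max r X) ^ q := by
        rw [Real.mul_rpow zero_le_two (hr.le.trans (le_max_left r X)), ← mul_assoc,
          ← Real.rpow_add zero_lt_two, neg_add_cancel, Real.rpow_zero, one_mul]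
    _ ≤ 2 ^ (-q) * (r + X) ^ q := by
        refine mul_le_mul_of_nonneg_left (Real.rpow_le_rpow_of_nonpos (by positivity) ?_ hq)
          (by positivity)
        linarith [le_max_left r X, le_max_right r X]

theorem stmt_4_general (d : ℕ) (n β : ℝ) (hn : 2 < n) (hβ : 0 < β) :
    ∃ C > 0, ∀ r : ℝ, 0 < r → ∀ x : EuclideanSpace ℝ (Fin d),
      ∫⁻ s in Set.Ioi (r ^ 2),
          ENNReal.ofReal (s ^ (-n / 2) * (1 + ‖x‖ / Real.sqrt s) ^ (-n - β)) ≤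
        ENNReal.ofReal (C * r ^ ((2 : ℝ) - n) * (1 + ‖x‖ / r) ^ (-n + 2)) := by
  set K := 2 / (β + 2) + 2 / (n - 2)
  have hK : 0 < K := add_pos (div_pos two_pos (by linarith)) (div_pos two_pos (by linarith))
  refine ⟨2 ^ (n - 2) * K, by positivity, fun r hr x => ?_⟩
  refine (lintegral_Ioi_sq_decayKernel_le_max hn (by linarith) hr (norm_nonneg x)).trans
    (ENNReal.ofReal_le_ofReal ?_)
  have hmax := max_rpow_le hr (norm_nonneg x) (sub_nonpos.mpr hn.le)
  rw [neg_sub] at hmax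
  rw [show -n + 2 = 2 - n by ring, mul_comm (2 ^ (n - 2)) K, mul_assoc K, mul_assoc K]
  gcongr

/-- For `n > 2`, `β > 0`, `g_s(x) = s^{-n/2}(1+|x|/√s)^{-n-β}`, one has
`∫_{r²}^∞ g_s(x) ds ≤ C r^{2-n} (1+|x|/r)^{-n+2}` for `r > 0`, `x ∈ ℝ^d`. -/
theorem stmt_4 (d : ℕ) (hd : 1 ≤ d) (n β : ℝ) (hn : 2 < n) (hβ : 0 < β) :
    ∃ C > 0, ∀ r : ℝ, 0 < r → ∀ x : EuclideanSpace ℝ (Fin d),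
      ∫⁻ s in Set.Ioi (r ^ 2),
          ENNReal.ofReal (s ^ (-n / 2) * (1 + ‖x‖ / Real.sqrt s) ^ (-n - β)) ≤
        ENNReal.ofReal (C * r ^ ((2 : ℝ) - n) * (1 + ‖x‖ / r) ^ (-n + 2)) :=
  stmt_4_general d n β hn hβ
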